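/- Let G be a group, N a normal subgroup, q : G → G/N the projection. Let f₁,…,f_k, g₁,…,g_k, α₁,…,α_k, β₁,…,β_k ∈ G with q(f_i) = q(α_i) and q(g_i) = q(β_i) for each i. Then the element [f₁,g₁]⋯[f_k,g_k]·([α₁,β₁]⋯[α_k,β_k])⁻¹ lies in [G,N], and its (G,N)-commutator length is at most 3k. -/

import Mathlib

open scoped commutatorElement

variable {G : Type*} [Group G]

/-- `x` is a product of `m` `(G,N)`-commutators. -/
def IsCommProd (N : Subgroup G) (m : ℕ) (x : G) : Prop :=
  ∃ c : Fin m → G, (∀ i, ∃ g h : G, h ∈ N ∧ c i = g * h * g⁻¹ * h⁻¹) ∧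
    (List.ofFn c).prod = x

/-- The `(G,N)`-commutator length. -/
noncomputable def clGN (N : Subgroup G) (x : G) : ℕ :=
  sInf {m | IsCommProd N m x}

/-!
Writing `f = α h₁` and `g = β h₂` with `h₁, h₂ ∈ N`, the identity
`[f, g] [α, β]⁻¹ = (αβ) [β⁻¹, h₁] [h₁, h₂] [h₂, α⁻¹] (αβ)⁻¹` shows that each factor
`[fᵢ, gᵢ] [αᵢ, βᵢ]⁻¹` is a conjugate of a product of three `(G,N)`-commutators.
Peeling off the first factor,
`[f₁,g₁] A ([α₁,β₁] B)⁻¹ = ([f₁,g₁] [α₁,β₁]⁻¹) · [α₁,β₁] (A B⁻¹) [α₁,β₁]⁻¹`,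
and products of `(G,N)`-commutators are stable under conjugation since `N` is normal,
so induction on `k` gives the bound `3k`.
-/

namespace IsCommProd

variable {N : Subgroup G} {m n : ℕ} {x y : G}

theorem zero_one : IsCommProd N 0 1 :=
  ⟨Fin.elim0, fun i => i.elim0, rfl⟩

theorem one_commutator {g h : G} (hh : h ∈ N) : IsCommProd N 1 ⁅g, h⁆ :=
  ⟨fun _ => ⁅g, h⁆, fun _ => ⟨g, h, hh, rfl⟩, by simp⟩

theorem one_commutator_of_left_mem {h g : G} (hh : h ∈ N) : IsCommProd N 1 ⁅h, g⁆ := by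
  have : ⁅h, g⁆ = ⁅h * g, h⁻¹⁆ := by simp only [commutatorElement_def]; group
  exact this ▸ one_commutator (N.inv_mem hh)

theorem mul (hx : IsCommProd N m x) (hy : IsCommProd N n y) : IsCommProd N (m + n) (x * y) := by
  obtain ⟨c, hc, rfl⟩ := hx
  obtain ⟨d, hd, rfl⟩ := hy
  refine ⟨Fin.append c d, fun i => ?_, by simp⟩
  induction i using Fin.addCases with
  | left i => simpa using hc i
  | right i => simpa using hd i

theorem map {H : Type*} [Group H] {N' : Subgroup H} (φ : G →* H) (hφ : ∀ h ∈ N, φ h ∈ N')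
    (hx : IsCommProd N m x) : IsCommProd N' m (φ x) := by
  obtain ⟨c, hc, rfl⟩ := hx
  refine ⟨fun i => φ (c i), fun i => ?_, by rw [List.ofFn_comp', map_list_prod]⟩
  obtain ⟨g, h, hh, hci⟩ := hc i
  exact ⟨φ g, φ h, hφ h hh, by simp [hci]⟩

theorem conj [N.Normal] (hx : IsCommProd N m x) (a : G) : IsCommProd N m (a * x * a⁻¹) :=
  hx.map (MulAut.conj a).toMonoidHom fun _ hh => ‹N.Normal›.conj_mem _ hh a

theorem mul_mul_inv [N.Normal] {a b c d : G} (h₁ : IsCommProd N m (a * b⁻¹))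
    (h₂ : IsCommProd N n (c * d⁻¹)) : IsCommProd N (m + n) (a * c * (b * d)⁻¹) := by
  have split : a * c * (b * d)⁻¹ = a * b⁻¹ * (b * (c * d⁻¹) * b⁻¹) := by group
  exact split ▸ h₁.mul (h₂.conj b)

theorem mem_commutator (hx : IsCommProd N m x) : x ∈ ⁅(⊤ : Subgroup G), N⁆ := by
  obtain ⟨c, hc, rfl⟩ := hx
  refine Subgroup.list_prod_mem _ fun y hy => ?_
  obtain ⟨i, rfl⟩ := List.mem_ofFn.mp hy
  obtain ⟨g, h, hh, hci⟩ := hc i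
  rw [hci, ← commutatorElement_def]
  exact Subgroup.commutator_mem_commutator (Subgroup.mem_top g) hh

theorem clGN_le (hx : IsCommProd N m x) : clGN N x ≤ m :=
  Nat.sInf_le hx

end IsCommProd

theorem commutator_mul_mul_commutator_inv (a b h₁ h₂ : G) :
    ⁅a * h₁, b * h₂⁆ * ⁅a, b⁆⁻¹ = (a * b) * (⁅b⁻¹, h₁⁆ * ⁅h₁, h₂⁆ * ⁅h₂, a⁻¹⁆) * (a * b)⁻¹ := by
  simp only [commutatorElement_def]
  group

theorem isCommProd_three_commutator_mul_mul_commutator_inv {N : Subgroup G} [N.Normal]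
    {a b h₁ h₂ : G} (hh₁ : h₁ ∈ N) (hh₂ : h₂ ∈ N) :
    IsCommProd N 3 (⁅a * h₁, b * h₂⁆ * ⁅a, b⁆⁻¹) := by
  rw [commutator_mul_mul_commutator_inv]
  exact (((IsCommProd.one_commutator hh₁).mul (IsCommProd.one_commutator hh₂)).mul
    (IsCommProd.one_commutator_of_left_mem hh₂)).conj _

theorem isCommProd_three_commutator_mul_commutator_inv_of_mk_eq {N : Subgroup G} [N.Normal]
    {f g α β : G} (hf : QuotientGroup.mk' N f = QuotientGroup.mk' N α)
    (hg : QuotientGroup.mk' N g = QuotientGroup.mk' N β) :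
    IsCommProd N 3 (⁅f, g⁆ * ⁅α, β⁆⁻¹) := by
  obtain ⟨h₁, hh₁, rfl⟩ := (QuotientGroup.mk'_eq_mk' N).mp hf.symm
  obtain ⟨h₂, hh₂, rfl⟩ := (QuotientGroup.mk'_eq_mk' N).mp hg.symm
  exact isCommProd_three_commutator_mul_mul_commutator_inv hh₁ hh₂

theorem isCommProd_prod_commutator_mul_inv (N : Subgroup G) [N.Normal] :
    ∀ (k : ℕ) (f g α β : Fin k → G),
      (∀ i, QuotientGroup.mk' N (f i) = QuotientGroup.mk' N (α i)) →
      (∀ i, QuotientGroup.mk' N (g i) = QuotientGroup.mk' N (β i)) →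
      IsCommProd N (3 * k) ((List.ofFn fun i => ⁅f i, g i⁆).prod *
        ((List.ofFn fun i => ⁅α i, β i⁆).prod)⁻¹)
  | 0, _, _, _, _, _, _ => by simpa using IsCommProd.zero_one
  | k + 1, f, g, α, β, hf, hg => by
    have ih := isCommProd_prod_commutator_mul_inv N k (fun i => f i.succ) (fun i => g i.succ)
      (fun i => α i.succ) (fun i => β i.succ) (fun i => hf i.succ) (fun i => hg i.succ)
    simp only [List.ofFn_succ, List.prod_cons]
    rw [show 3 * (k + 1) = 3 + 3 * k by ring]
    exact (isCommProd_three_commutator_mul_commutator_inv_of_mk_eq (hf 0) (hg 0)).mul_mul_inv ih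

/-- If `q(fᵢ) = q(αᵢ)` and `q(gᵢ) = q(βᵢ)` in `G/N`, then
`[f₁,g₁]⋯[f_k,g_k]·([α₁,β₁]⋯[α_k,β_k])⁻¹ ∈ [G,N]` and its `(G,N)`-commutator
length is at most `3k`. -/
theorem key_lemma_8_4 (N : Subgroup G) [hN : N.Normal] (k : ℕ)
    (f g α β : Fin k → G)
    (hf : ∀ i, QuotientGroup.mk' N (f i) = QuotientGroup.mk' N (α i))
    (hg : ∀ i, QuotientGroup.mk' N (g i) = QuotientGroup.mk' N (β i)) :
    (List.ofFn fun i => ⁅f i, g i⁆).prod *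
        ((List.ofFn fun i => ⁅α i, β i⁆).prod)⁻¹ ∈ ⁅(⊤ : Subgroup G), N⁆ ∧
      clGN N ((List.ofFn fun i => ⁅f i, g i⁆).prod *
        ((List.ofFn fun i => ⁅α i, β i⁆).prod)⁻¹) ≤ 3 * k := by
  have h := isCommProd_prod_commutator_mul_inv N k f g α β hf hg
  exact ⟨h.mem_commutator, h.clGN_le⟩
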